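/- arXiv:1703.10211 — 2 statements merged into one kernel-verified Lean document; each statement's English description precedes it below -/
import Mathlib

section
/- Let X be a real Hilbert space, F : X → X globally Lipschitz with constant L. Let x₁, …, x_N be pairwise independent random variables in X with E‖x_i‖² ≤ C for all i, and let x̄ = (1/N)∑ⱼ xⱼ. Then for each i, |E(F(x̄)·x_i) − F(E x̄)·E x_i| ≤ (2LC + L·C)/N + √C · L · √(C/N); in particular there is a constant K depending only on L and C such that |E(F(x̄)·x_i) − F(E x̄)·E x_i| ≤ K/√N. -/
open MeasureTheory ProbabilityTheory
open scoped RealInnerProductSpace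

section Aux
variable {Ω : Type*} [MeasurableSpace Ω] {μ : Measure Ω}
  {X : Type*} [NormedAddCommGroup X] [InnerProductSpace ℝ X]

lemma aux_integrable_norm_mul {f g : Ω → X} (hf : MemLp f 2 μ) (hg : MemLp g 2 μ) :
    Integrable (fun ω => ‖f ω‖ * ‖g ω‖) μ := by
  have hint : Integrable (fun ω => ‖f ω‖ ^ 2 + ‖g ω‖ ^ 2) μ :=
    ((memLp_two_iff_integrable_sq_norm hf.1).1 hf).add
      ((memLp_two_iff_integrable_sq_norm hg.1).1 hg)
  refine hint.mono' (hf.1.norm.mul hg.1.norm) (Filter.Eventually.of_forall fun ω => ?_)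
  have h1 : (0:ℝ) ≤ ‖f ω‖ * ‖g ω‖ := mul_nonneg (norm_nonneg _) (norm_nonneg _)
  rw [Real.norm_of_nonneg h1]
  nlinarith [sq_nonneg (‖f ω‖ - ‖g ω‖), h1]

lemma aux_integrable_inner {f g : Ω → X} (hf : MemLp f 2 μ) (hg : MemLp g 2 μ) :
    Integrable (fun ω => ⟪f ω, g ω⟫) μ :=
  (aux_integrable_norm_mul hf hg).mono' (hf.1.inner hg.1)
    (Filter.Eventually.of_forall fun ω => by
      simpa using norm_inner_le_norm (𝕜 := ℝ) (f ω) (g ω))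

end Aux

set_option maxHeartbeats 1000000 in
lemma indep_integral_inner {Ω : Type*} [MeasurableSpace Ω] {μ : Measure Ω} [IsProbabilityMeasure μ]
    {X : Type*} [NormedAddCommGroup X] [InnerProductSpace ℝ X] [CompleteSpace X]
    [MeasurableSpace X] [BorelSpace X]
    {f g : Ω → X} (hfg : IndepFun f g μ) (hf : Integrable f μ) (hg : Integrable g μ) :
    ∫ ω, ⟪f ω, g ω⟫ ∂μ = ⟪∫ ω, f ω ∂μ, ∫ ω, g ω ∂μ⟫ := by
  obtain ⟨f', hf'sm, hff'⟩ := hf.1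
  obtain ⟨g', hg'sm, hgg'⟩ := hg.1
  have hf' : Integrable f' μ := hf.congr hff'
  have hg' : Integrable g' μ := hg.congr hgg'
  have hfg' : IndepFun f' g' μ := hfg.congr hff' hgg'
  set Y : Submodule ℝ X :=
    (Submodule.span ℝ (Set.range f' ∪ Set.range g')).topologicalClosure with hY
  haveI : CompleteSpace Y := (Submodule.isClosed_topologicalClosure _).completeSpace_coe
  have hsep : TopologicalSpace.IsSeparable (Y : Set X) := by
    rw [hY, Submodule.topologicalClosure_coe]
    exact ((hf'sm.isSeparable_range.union hg'sm.isSeparable_range).span).closure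
  haveI : TopologicalSpace.SeparableSpace Y := hsep.separableSpace
  haveI : SecondCountableTopology Y := UniformSpace.secondCountable_of_separable _
  have hfY : ∀ ω, f' ω ∈ Y := fun ω =>
    Submodule.le_topologicalClosure _ (Submodule.subset_span (Or.inl ⟨ω, rfl⟩))
  have hgY : ∀ ω, g' ω ∈ Y := fun ω =>
    Submodule.le_topologicalClosure _ (Submodule.subset_span (Or.inr ⟨ω, rfl⟩))
  set F : Ω → Y := fun ω => (⟨f' ω, hfY ω⟩ : Y) with hFdef
  set G : Ω → Y := fun ω => (⟨g' ω, hgY ω⟩ : Y) with hGdef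
  have hFmeas : Measurable F := hf'sm.measurable.subtype_mk
  have hGmeas : Measurable G := hg'sm.measurable.subtype_mk
  have hFG : IndepFun F G μ := by
    rw [indepFun_iff_measure_inter_preimage_eq_mul] at hfg' ⊢
    intro s t hs ht
    obtain ⟨s', hs', rfl⟩ := hs
    obtain ⟨t', ht', rfl⟩ := ht
    exact hfg' s' t' hs' ht'
  have hFint : Integrable F μ := by
    refine ⟨hFmeas.stronglyMeasurable.aestronglyMeasurable, ?_⟩
    have := hf'.2
    exact this
  have hGint : Integrable G μ := by
    refine ⟨hGmeas.stronglyMeasurable.aestronglyMeasurable, ?_⟩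
    have := hg'.2
    exact this
  have hmapFG : μ.map (fun ω => (F ω, G ω)) = (μ.map F).prod (μ.map G) :=
    (indepFun_iff_map_prod_eq_prod_map_map hFmeas.aemeasurable hGmeas.aemeasurable).1 hFG
  haveI : IsProbabilityMeasure (μ.map F) := Measure.isProbabilityMeasure_map hFmeas.aemeasurable
  haveI : IsProbabilityMeasure (μ.map G) := Measure.isProbabilityMeasure_map hGmeas.aemeasurable
  have hIdF : Integrable (id : Y → Y) (μ.map F) :=
    (integrable_map_measure aestronglyMeasurable_id hFmeas.aemeasurable).2 hFint
  have hIdG : Integrable (id : Y → Y) (μ.map G) :=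
    (integrable_map_measure aestronglyMeasurable_id hGmeas.aemeasurable).2 hGint
  have hinner_m : Measurable (fun p : Y × Y => (⟪p.1, p.2⟫ : ℝ)) :=
    measurable_fst.inner measurable_snd
  have hinner_int : Integrable (fun p : Y × Y => (⟪p.1, p.2⟫ : ℝ)) ((μ.map F).prod (μ.map G)) := by
    refine (hIdF.norm.mul_prod hIdG.norm).mono' hinner_m.aestronglyMeasurable
      (Filter.Eventually.of_forall fun p => ?_)
    simpa using norm_inner_le_norm (𝕜 := ℝ) p.1 p.2
  have step1 : ∫ ω, (⟪F ω, G ω⟫ : ℝ) ∂μ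
      = ∫ p : Y × Y, (⟪p.1, p.2⟫ : ℝ) ∂((μ.map F).prod (μ.map G)) := by
    rw [← hmapFG, integral_map (hFmeas.aemeasurable.prodMk hGmeas.aemeasurable)
      hinner_m.aestronglyMeasurable]
  have step2 : ∫ p : Y × Y, (⟪p.1, p.2⟫ : ℝ) ∂((μ.map F).prod (μ.map G))
      = ⟪∫ a, id a ∂(μ.map F), ∫ b, id b ∂(μ.map G)⟫ := by
    rw [integral_prod _ hinner_int]
    have : ∀ a : Y, ∫ b, (⟪a, b⟫ : ℝ) ∂(μ.map G) = ⟪a, ∫ b, id b ∂(μ.map G)⟫ := fun a =>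
      integral_inner hIdG a
    simp_rw [this]
    calc ∫ a, (⟪a, ∫ b, id b ∂(μ.map G)⟫ : ℝ) ∂(μ.map F)
        = ∫ a, (⟪∫ b, id b ∂(μ.map G), a⟫ : ℝ) ∂(μ.map F) := by simp_rw [real_inner_comm]
      _ = ⟪∫ b, id b ∂(μ.map G), ∫ a, id a ∂(μ.map F)⟫ := integral_inner hIdF _
      _ = _ := real_inner_comm _ _
  have hIF : ∫ a, id a ∂(μ.map F) = ∫ ω, F ω ∂μ :=
    integral_map hFmeas.aemeasurable aestronglyMeasurable_id
  have hIG : ∫ a, id a ∂(μ.map G) = ∫ ω, G ω ∂μ :=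
    integral_map hGmeas.aemeasurable aestronglyMeasurable_id
  have hcoeF : ((∫ ω, F ω ∂μ : Y) : X) = ∫ ω, f' ω ∂μ := by
    have h := Y.subtypeL.integral_comp_comm hFint
    simp only [Submodule.subtypeL_apply] at h
    exact h.symm
  have hcoeG : ((∫ ω, G ω ∂μ : Y) : X) = ∫ ω, g' ω ∂μ := by
    have h := Y.subtypeL.integral_comp_comm hGint
    simp only [Submodule.subtypeL_apply] at h
    exact h.symm
  have lhs_eq : ∫ ω, (⟪f ω, g ω⟫ : ℝ) ∂μ = ∫ ω, (⟪F ω, G ω⟫ : ℝ) ∂μ := by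
    refine integral_congr_ae ?_
    filter_upwards [hff', hgg'] with ω h1 h2
    rw [h1, h2]; rfl
  rw [lhs_eq, step1, step2, hIF, hIG]
  rw [integral_congr_ae hff', integral_congr_ae hgg', ← hcoeF, ← hcoeG]
  rfl

set_option maxHeartbeats 2000000 in
theorem stmt_4 {Ω : Type*} [MeasurableSpace Ω] (μ : Measure Ω) [IsProbabilityMeasure μ]
    {X : Type*} [NormedAddCommGroup X] [InnerProductSpace ℝ X] [CompleteSpace X]
    [MeasurableSpace X] [BorelSpace X]
    (N : ℕ) (hN : 0 < N) (x : Fin N → Ω → X) (C L : ℝ) (hC : 0 ≤ C) (hL : 0 ≤ L)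
    (F : X → X) (hF : ∀ a b, ‖F a - F b‖ ≤ L * ‖a - b‖)
    (hmeas : ∀ i, AEMeasurable (x i) μ)
    (hindep : ∀ i j, i ≠ j → IndepFun (x i) (x j) μ)
    (hint : ∀ i, Integrable (x i) μ)
    (hsq : ∀ i, Integrable (fun ω => ‖x i ω‖ ^ 2) μ)
    (hbound : ∀ i, ∫ ω, ‖x i ω‖ ^ 2 ∂μ ≤ C)
    (xbar : Ω → X) (hxbar : ∀ ω, xbar ω = (N : ℝ)⁻¹ • ∑ i, x i ω)
    (hFint : Integrable (fun ω => F (xbar ω)) μ)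
    (hip : ∀ i, Integrable (fun ω => ⟪F (xbar ω), x i ω⟫) μ) :
    (∀ i, |(∫ ω, ⟪F (xbar ω), x i ω⟫ ∂μ) -
        ⟪F (∫ ω, xbar ω ∂μ), ∫ ω, x i ω ∂μ⟫|
      ≤ (2 * L * C + L * C) / N + Real.sqrt C * L * Real.sqrt (C / N)) ∧
    ∃ K : ℝ, 0 ≤ K ∧ ∀ i, |(∫ ω, ⟪F (xbar ω), x i ω⟫ ∂μ) -
        ⟪F (∫ ω, xbar ω ∂μ), ∫ ω, x i ω ∂μ⟫| ≤ K / Real.sqrt N := by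
  have hNpos : (0:ℝ) < N := by exact_mod_cast hN
  have hxbar_fun : xbar = fun ω => (N:ℝ)⁻¹ • ∑ i, x i ω := funext hxbar
  have hxm : ∀ i, AEStronglyMeasurable (x i) μ := fun i => (hint i).1
  have hL2 : ∀ i, MemLp (x i) 2 μ := fun i =>
    (memLp_two_iff_integrable_sq_norm (hxm i)).2 (hsq i)
  set m : Fin N → X := fun i => ∫ ω, x i ω ∂μ with hm
  set M : X := ∫ ω, xbar ω ∂μ with hMdef
  have hxbarL2 : MemLp xbar 2 μ := by
    have h := (memLp_finset_sum' Finset.univ (fun i (_ : i ∈ Finset.univ) => hL2 i)).const_smul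
      ((N:ℝ)⁻¹)
    refine h.ae_eq (Filter.Eventually.of_forall fun ω => ?_)
    rw [hxbar ω]
    simp [Finset.sum_apply]
  have hxbar_int : Integrable xbar μ := hxbarL2.integrable one_le_two
  have hM : M = (N:ℝ)⁻¹ • ∑ i, m i := by
    rw [hMdef, hxbar_fun, integral_smul, integral_finset_sum _ (fun i _ => hint i)]
  set y : Fin N → Ω → X := fun j ω => x j ω - m j with hy
  have hyL2 : ∀ j, MemLp (y j) 2 μ := fun j => (hL2 j).sub (memLp_const (m j))
  have hy_int : ∀ j, Integrable (y j) μ := fun j => (hint j).sub (integrable_const _)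
  have hy_mean : ∀ j, ∫ ω, y j ω ∂μ = 0 := fun j => by
    rw [hy]
    simp only
    rw [integral_sub (hint j) (integrable_const _), integral_const, probReal_univ,
      one_smul]
    exact sub_self (m j)
  have hcross : ∀ j k, j ≠ k → ∫ ω, ⟪y j ω, y k ω⟫ ∂μ = 0 := by
    intro j k hjk
    have hind : IndepFun (y j) (y k) μ :=
      (hindep j k hjk).comp (φ := fun a : X => a - m j) (ψ := fun a : X => a - m k)
        ((continuous_id.sub continuous_const).measurable)
        ((continuous_id.sub continuous_const).measurable)
    rw [indep_integral_inner hind (hy_int j) (hy_int k), hy_mean j, inner_zero_left]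
  have hdiag : ∀ j, ∫ ω, ‖y j ω‖^2 ∂μ ≤ C := by
    intro j
    have hinner_int : Integrable (fun ω => (⟪x j ω, m j⟫:ℝ)) μ := (hint j).inner_const (m j)
    have h1 : ∫ ω, (⟪x j ω, m j⟫:ℝ) ∂μ = ‖m j‖^2 := by
      have he : (fun ω => (⟪x j ω, m j⟫:ℝ)) = fun ω => (⟪m j, x j ω⟫:ℝ) := by
        funext ω; exact real_inner_comm _ _
      rw [he, integral_inner (hint j)]
      exact real_inner_self_eq_norm_sq (m j)
    have h2 : ∫ ω, ‖y j ω‖^2 ∂μ = ∫ ω, ‖x j ω‖^2 ∂μ - ‖m j‖^2 := by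
      have hpt : (fun ω => ‖y j ω‖^2)
          = fun ω => ‖x j ω‖^2 - 2 * ⟪x j ω, m j⟫ + ‖m j‖^2 := by
        funext ω; exact norm_sub_sq_real _ _
      have hI1 : Integrable (fun ω => ‖x j ω‖^2 - 2 * (⟪x j ω, m j⟫:ℝ)) μ :=
        (hsq j).sub (hinner_int.const_mul 2)
      rw [hpt, integral_add hI1 (integrable_const _),
        integral_sub (hsq j) (hinner_int.const_mul 2), integral_const_mul, h1,
        integral_const, probReal_univ, smul_eq_mul, one_mul]
      ring
    rw [h2]
    exact (sub_le_self _ (sq_nonneg _)).trans (hbound j)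
  have hinner_int_jk : ∀ j k, Integrable (fun ω => (⟪y j ω, y k ω⟫:ℝ)) μ := fun j k =>
    aux_integrable_inner (hyL2 j) (hyL2 k)
  -- variance bound
  have hVle : ∫ ω, ‖xbar ω - M‖^2 ∂μ ≤ C / N := by
    have hsum_y : ∀ ω, xbar ω - M = (N:ℝ)⁻¹ • ∑ j, y j ω := fun ω => by
      rw [hxbar ω, hM, ← smul_sub, ← Finset.sum_sub_distrib]
    have hpt : ∀ ω, ‖xbar ω - M‖^2 = ((N:ℝ)⁻¹)^2 * ‖∑ j, y j ω‖^2 := fun ω => by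
      rw [hsum_y ω, norm_smul, mul_pow]
      congr 1
      rw [Real.norm_eq_abs, sq_abs]
    have hsq_expand : ∀ ω, ‖∑ j, y j ω‖^2 = ∑ j, ∑ k, (⟪y j ω, y k ω⟫:ℝ) := fun ω => by
      rw [← real_inner_self_eq_norm_sq, sum_inner]
      exact Finset.sum_congr rfl fun j _ => inner_sum _ _ _
    have hIsum : ∫ ω, ‖∑ j, y j ω‖^2 ∂μ = ∑ j, ∑ k, ∫ ω, (⟪y j ω, y k ω⟫:ℝ) ∂μ := by
      calc ∫ ω, ‖∑ j, y j ω‖^2 ∂μ = ∫ ω, ∑ j, ∑ k, (⟪y j ω, y k ω⟫:ℝ) ∂μ :=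
            integral_congr_ae (Filter.Eventually.of_forall hsq_expand)
        _ = ∑ j, ∑ k, ∫ ω, (⟪y j ω, y k ω⟫:ℝ) ∂μ := by
            rw [integral_finset_sum _
              (fun j _ => integrable_finset_sum _ (fun k _ => hinner_int_jk j k))]
            exact Finset.sum_congr rfl fun j _ =>
              integral_finset_sum _ (fun k _ => hinner_int_jk j k)
    have hdiagsum : ∑ j, ∑ k, ∫ ω, (⟪y j ω, y k ω⟫:ℝ) ∂μ ≤ N * C := by
      have hrow : ∀ j : Fin N, ∑ k, ∫ ω, (⟪y j ω, y k ω⟫:ℝ) ∂μ ≤ C := by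
        intro j
        rw [Finset.sum_eq_single j (fun k _ hkj => hcross j k (Ne.symm hkj))
          (fun h => absurd (Finset.mem_univ j) h)]
        calc ∫ ω, (⟪y j ω, y j ω⟫:ℝ) ∂μ = ∫ ω, ‖y j ω‖^2 ∂μ :=
              integral_congr_ae (Filter.Eventually.of_forall fun ω =>
                real_inner_self_eq_norm_sq _)
          _ ≤ C := hdiag j
      calc ∑ j, ∑ k, ∫ ω, (⟪y j ω, y k ω⟫:ℝ) ∂μ ≤ ∑ _j : Fin N, C :=
            Finset.sum_le_sum (fun j _ => hrow j)
        _ = N * C := by simp [Finset.sum_const, nsmul_eq_mul]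
    calc ∫ ω, ‖xbar ω - M‖^2 ∂μ = ((N:ℝ)⁻¹)^2 * ∫ ω, ‖∑ j, y j ω‖^2 ∂μ := by
          rw [integral_congr_ae (Filter.Eventually.of_forall hpt), integral_const_mul]
      _ ≤ ((N:ℝ)⁻¹)^2 * (N * C) := by
          rw [hIsum]
          exact mul_le_mul_of_nonneg_left hdiagsum (by positivity)
      _ = C / N := by field_simp
  -- main per-i estimate
  have hdiffL2 : MemLp (fun ω => xbar ω - M) 2 μ := hxbarL2.sub (memLp_const M)
  have main : ∀ i, |(∫ ω, ⟪F (xbar ω), x i ω⟫ ∂μ) - ⟪F M, ∫ ω, x i ω ∂μ⟫|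
      ≤ Real.sqrt C * L * Real.sqrt (C / N) := by
    intro i
    set g : Ω → X := fun ω => F (xbar ω) - F M with hgdef
    have hgb : ∀ ω, ‖g ω‖ ≤ L * ‖xbar ω - M‖ := fun ω => hF _ _
    have hgsm : AEStronglyMeasurable g μ := hFint.1.sub aestronglyMeasurable_const
    have hgL2 : MemLp g 2 μ := hdiffL2.of_le_mul hgsm
      (Filter.Eventually.of_forall fun ω => by
        simpa using (hgb ω).trans (by rw [mul_comm]))
    have hstep1 : (∫ ω, ⟪F (xbar ω), x i ω⟫ ∂μ) - ⟪F M, ∫ ω, x i ω ∂μ⟫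
        = ∫ ω, ⟪g ω, x i ω⟫ ∂μ := by
      have h1 : ∫ ω, (⟪F M, x i ω⟫:ℝ) ∂μ = ⟪F M, ∫ ω, x i ω ∂μ⟫ := integral_inner (hint i) _
      rw [← h1, ← integral_sub (hip i) ((hint i).const_inner (F M))]
      refine integral_congr_ae (Filter.Eventually.of_forall fun ω => ?_)
      rw [hgdef]
      simp [inner_sub_left]
    have habs : |∫ ω, (⟪g ω, x i ω⟫:ℝ) ∂μ| ≤ ∫ ω, ‖g ω‖ * ‖x i ω‖ ∂μ := by
      calc |∫ ω, (⟪g ω, x i ω⟫:ℝ) ∂μ| ≤ ∫ ω, |(⟪g ω, x i ω⟫:ℝ)| ∂μ := by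
            simpa [Real.norm_eq_abs] using
              norm_integral_le_integral_norm (fun ω => (⟪g ω, x i ω⟫:ℝ))
        _ ≤ ∫ ω, ‖g ω‖ * ‖x i ω‖ ∂μ := by
            refine integral_mono_of_nonneg (Filter.Eventually.of_forall fun ω => abs_nonneg _)
              (aux_integrable_norm_mul hgL2 (hL2 i))
              (Filter.Eventually.of_forall fun ω => ?_)
            simpa [Real.norm_eq_abs] using norm_inner_le_norm (𝕜 := ℝ) (g ω) (x i ω)
    have hpq : Real.HolderConjugate 2 2 := Real.holderConjugate_iff.mpr ⟨one_lt_two, by norm_num⟩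
    have h2 : ENNReal.ofReal (2:ℝ) = 2 := by norm_num
    have hholder := integral_mul_norm_le_Lp_mul_Lq (μ := μ) hpq
      (h2 ▸ hgL2) (h2 ▸ hL2 i)
    have hrw : ∀ f : Ω → X, (∫ ω, ‖f ω‖ ^ (2:ℝ) ∂μ) ^ (1/(2:ℝ))
        = Real.sqrt (∫ ω, ‖f ω‖ ^ 2 ∂μ) := by
      intro f
      rw [Real.sqrt_eq_rpow]
      congr 1
      refine integral_congr_ae (Filter.Eventually.of_forall fun ω => ?_)
      show ‖f ω‖ ^ (2:ℝ) = ‖f ω‖ ^ (2:ℕ)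
      rw [show ((2:ℝ)) = ((2:ℕ):ℝ) by norm_num, Real.rpow_natCast]
    rw [hrw, hrw] at hholder
    -- bound ∫‖g‖²
    have hgsq_int : Integrable (fun ω => ‖g ω‖^2) μ :=
      (memLp_two_iff_integrable_sq_norm hgsm).1 hgL2
    have hdsq_int : Integrable (fun ω => ‖xbar ω - M‖^2) μ :=
      (memLp_two_iff_integrable_sq_norm hdiffL2.1).1 hdiffL2
    have hgsq : ∫ ω, ‖g ω‖^2 ∂μ ≤ L^2 * (C/N) := by
      calc ∫ ω, ‖g ω‖^2 ∂μ ≤ ∫ ω, L^2 * ‖xbar ω - M‖^2 ∂μ := by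
            refine integral_mono_of_nonneg (Filter.Eventually.of_forall fun ω => sq_nonneg _)
              (hdsq_int.const_mul _) (Filter.Eventually.of_forall fun ω => ?_)
            show ‖g ω‖^2 ≤ L^2 * ‖xbar ω - M‖^2
            have := hgb ω
            nlinarith [norm_nonneg (g ω), norm_nonneg (xbar ω - M)]
        _ = L^2 * ∫ ω, ‖xbar ω - M‖^2 ∂μ := integral_const_mul _ _
        _ ≤ L^2 * (C/N) := mul_le_mul_of_nonneg_left hVle (sq_nonneg _)
    have hsg : Real.sqrt (∫ ω, ‖g ω‖^2 ∂μ) ≤ L * Real.sqrt (C/N) := by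
      calc Real.sqrt (∫ ω, ‖g ω‖^2 ∂μ) ≤ Real.sqrt (L^2 * (C/N)) := Real.sqrt_le_sqrt hgsq
        _ = L * Real.sqrt (C/N) := by
          rw [Real.sqrt_mul (sq_nonneg L), Real.sqrt_sq hL]
    have hsx : Real.sqrt (∫ ω, ‖x i ω‖^2 ∂μ) ≤ Real.sqrt C := Real.sqrt_le_sqrt (hbound i)
    rw [hstep1]
    calc |∫ ω, (⟪g ω, x i ω⟫:ℝ) ∂μ| ≤ ∫ ω, ‖g ω‖ * ‖x i ω‖ ∂μ := habs
      _ ≤ Real.sqrt (∫ ω, ‖g ω‖^2 ∂μ) * Real.sqrt (∫ ω, ‖x i ω‖^2 ∂μ) := hholder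
      _ ≤ (L * Real.sqrt (C/N)) * Real.sqrt C := by
          exact mul_le_mul hsg hsx (Real.sqrt_nonneg _) (by positivity)
      _ = Real.sqrt C * L * Real.sqrt (C / N) := by ring
  have part1 : ∀ i, |(∫ ω, ⟪F (xbar ω), x i ω⟫ ∂μ) - ⟪F M, ∫ ω, x i ω ∂μ⟫|
      ≤ (2 * L * C + L * C) / N + Real.sqrt C * L * Real.sqrt (C / N) := by
    intro i
    have h0 : (0:ℝ) ≤ (2 * L * C + L * C) / N := by positivity
    linarith [main i]
  refine ⟨part1, ⟨4 * L * C, by positivity, fun i => ?_⟩⟩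
  have hsN : 0 < Real.sqrt N := Real.sqrt_pos.2 hNpos
  have h1N : (1:ℝ) ≤ N := by exact_mod_cast hN
  have hsNN : Real.sqrt N ≤ N := by
    nlinarith [Real.sq_sqrt (le_of_lt hNpos), Real.sqrt_nonneg (N:ℝ),
      Real.one_le_sqrt.2 h1N]
  have e1 : Real.sqrt C * L * Real.sqrt (C/N) = L * C / Real.sqrt N := by
    rw [Real.sqrt_div hC]
    rw [show Real.sqrt C * L * (Real.sqrt C / Real.sqrt N)
      = L * (Real.sqrt C * Real.sqrt C) / Real.sqrt N by ring, Real.mul_self_sqrt hC]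
  have e2 : (2 * L * C + L * C) / N ≤ (3 * L * C) / Real.sqrt N := by
    rw [show (2*L*C + L*C) = 3*L*C by ring]
    gcongr
  calc |(∫ ω, ⟪F (xbar ω), x i ω⟫ ∂μ) - ⟪F M, ∫ ω, x i ω ∂μ⟫|
      ≤ (2 * L * C + L * C) / N + Real.sqrt C * L * Real.sqrt (C / N) := part1 i
    _ ≤ (3 * L * C) / Real.sqrt N + L * C / Real.sqrt N := add_le_add e2 (le_of_eq e1)
    _ = 4 * L * C / Real.sqrt N := by ring
end

section
/- Let X be a real Hilbert space and G : X → ℝ Fréchet differentiable with β-Lipschitz gradient and ‖∇G(0)‖ < ∞. Let x₁, …, x_N be pairwise independent random variables in X with E‖x_i‖² ≤ C, let x̄ = (1/N)∑ⱼ xⱼ and x̄₋ᵢ = (1/N)∑_{j≠i} xⱼ. Then E|G(x̄) − G(x̄₋ᵢ)| ≤ (√C ‖∇G(0)‖)/N + βC/N + βC/(2N²); in particular E|G(x̄) − G(x̄₋ᵢ)| = O(1/N). -/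
open MeasureTheory ProbabilityTheory
open scoped RealInnerProductSpace

lemma descent_lemma {X : Type*} [NormedAddCommGroup X] [InnerProductSpace ℝ X] [CompleteSpace X]
    (G : X → ℝ) (g : X → X) (β : ℝ)
    (hderiv : ∀ y, HasGradientAt G (g y) y)
    (hlip : ∀ a b, ‖g a - g b‖ ≤ β * ‖a - b‖) (a b : X) :
    |G a - G b| ≤ ‖g b‖ * ‖a - b‖ + β / 2 * ‖a - b‖ ^ 2 := by
  set v := a - b with hv
  set f : ℝ → ℝ := fun t => G (b + t • v) - G b with hf
  set f' : ℝ → ℝ := fun t => ⟪g (b + t • v), v⟫ with hf'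
  have hder : ∀ t : ℝ, HasDerivAt f (f' t) t := by
    intro t
    have hc : HasDerivAt (fun t : ℝ => b + t • v) v t := by
      simpa using ((hasDerivAt_id t).smul_const v).const_add b
    have := ((hderiv (b + t • v)).hasFDerivAt.comp_hasDerivAt t hc).sub_const (G b)
    simpa [f, f', InnerProductSpace.toDual_apply_apply] using this
  set c1 : ℝ := ‖g b‖ * ‖v‖ with hc1
  set c2 : ℝ := β / 2 * ‖v‖ ^ 2 with hc2
  set B : ℝ → ℝ := fun t => c1 * t + c2 * t ^ 2 with hB
  set B' : ℝ → ℝ := fun t => c1 + c2 * (2 * t) with hB'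
  have hBd : ∀ t : ℝ, HasDerivAt B (B' t) t := by
    intro t
    have h1 : HasDerivAt (fun t : ℝ => c1 * t) c1 t := by
      simpa using (hasDerivAt_id t).const_mul c1
    have h2 : HasDerivAt (fun t : ℝ => c2 * t ^ 2) (c2 * (2 * t)) t := by
      simpa using (hasDerivAt_pow 2 t).const_mul c2
    exact h1.add h2
  have bound : ∀ t ∈ Set.Ico (0:ℝ) 1, ‖f' t‖ ≤ B' t := by
    intro t ht
    have ht0 : 0 ≤ t := ht.1
    have h1 : |⟪g (b + t • v), v⟫| ≤ ‖g (b + t • v)‖ * ‖v‖ := abs_real_inner_le_norm _ _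
    have h2 : ‖g (b + t • v)‖ ≤ ‖g b‖ + β * (t * ‖v‖) := by
      have := hlip (b + t • v) b
      have h3 : ‖b + t • v - b‖ = t * ‖v‖ := by
        simp [norm_smul, abs_of_nonneg ht0]
      calc ‖g (b + t • v)‖ = ‖g b + (g (b + t • v) - g b)‖ := by rw [add_sub_cancel]
        _ ≤ ‖g b‖ + ‖g (b + t • v) - g b‖ := norm_add_le _ _
        _ ≤ ‖g b‖ + β * (t * ‖v‖) := by rw [← h3]; linarith [hlip (b + t • v) b]
    have hvnn : (0:ℝ) ≤ ‖v‖ := norm_nonneg _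
    calc ‖f' t‖ = |⟪g (b + t • v), v⟫| := rfl
      _ ≤ ‖g (b + t • v)‖ * ‖v‖ := h1
      _ ≤ (‖g b‖ + β * (t * ‖v‖)) * ‖v‖ := by
          exact mul_le_mul_of_nonneg_right h2 hvnn
      _ = B' t := by simp only [B', hc1, hc2]; ring
  have key := image_norm_le_of_norm_deriv_right_le_deriv_boundary
    (f := f) (a := 0) (b := 1) (f' := f')
    (fun t _ => (hder t).continuousAt.continuousWithinAt)
    (fun t _ => (hder t).hasDerivWithinAt)
    (by simp [f, B]) hBd bound (Set.right_mem_Icc.2 zero_le_one)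
  have hfa : f 1 = G a - G b := by simp [f, hv]
  have hB1 : B 1 = ‖g b‖ * ‖a - b‖ + β / 2 * ‖a - b‖ ^ 2 := by
    simp [B, hc1, hc2, hv]
  rw [hfa, hB1] at key
  exact key

theorem stmt_7 {Ω : Type*} [MeasurableSpace Ω] (μ : Measure Ω) [IsProbabilityMeasure μ]
    {X : Type*} [NormedAddCommGroup X] [InnerProductSpace ℝ X] [CompleteSpace X]
    [MeasurableSpace X] [BorelSpace X]
    (N : ℕ) (hN : 0 < N) (x : Fin N → Ω → X) (C β : ℝ) (hC : 0 ≤ C) (hβ : 0 ≤ β)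
    (G : X → ℝ) (g : X → X)
    (hderiv : ∀ y, HasGradientAt G (g y) y)
    (hlip : ∀ a b, ‖g a - g b‖ ≤ β * ‖a - b‖)
    (hmeas : ∀ i, AEMeasurable (x i) μ)
    (hindep : ∀ i j, i ≠ j → IndepFun (x i) (x j) μ)
    (hint : ∀ i, Integrable (x i) μ)
    (hsq : ∀ i, Integrable (fun ω => ‖x i ω‖ ^ 2) μ)
    (hbound : ∀ i, ∫ ω, ‖x i ω‖ ^ 2 ∂μ ≤ C)
    (xbar xbarmi : Fin N → Ω → X)
    (hxbar : ∀ i ω, xbar i ω = (N : ℝ)⁻¹ • ∑ j, x j ω)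
    (hxbarmi : ∀ i ω, xbarmi i ω = (N : ℝ)⁻¹ • ∑ j ∈ Finset.univ.erase i, x j ω)
    (hGint : ∀ i, Integrable (fun ω => |G (xbar i ω) - G (xbarmi i ω)|) μ) :
    (∀ i, ∫ ω, |G (xbar i ω) - G (xbarmi i ω)| ∂μ
        ≤ Real.sqrt C * ‖g 0‖ / N + β * C / N + β * C / (2 * N ^ 2)) ∧
    ∃ K : ℝ, 0 ≤ K ∧ ∀ i, ∫ ω, |G (xbar i ω) - G (xbarmi i ω)| ∂μ ≤ K / N := by
  have hNr : (0:ℝ) < N := Nat.cast_pos.2 hN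
  set n : Fin N → Ω → ℝ := fun j ω => ‖x j ω‖ with hn
  have hnm : ∀ j, AEStronglyMeasurable (n j) μ :=
    fun j => ((hmeas j).norm).aestronglyMeasurable
  have hmem : ∀ j, MemLp (n j) 2 μ :=
    fun j => (memLp_two_iff_integrable_sq (hnm j)).2 (hsq j)
  have hni : ∀ j, Integrable (n j) μ := fun j => (hmem j).integrable one_le_two
  have hninn : ∀ j, 0 ≤ ∫ ω, n j ω ∂μ :=
    fun j => integral_nonneg fun ω => norm_nonneg _
  have hInn : ∀ j, ∫ ω, n j ω ∂μ ≤ Real.sqrt C := by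
    intro j
    have hvar := variance_nonneg (n j) μ
    rw [variance_eq_sub (hmem j)] at hvar
    have h1 : (∫ ω, n j ω ∂μ) ^ 2 ≤ ∫ ω, n j ω ^ 2 ∂μ := by
      have : μ[(n j) ^ 2] = ∫ ω, n j ω ^ 2 ∂μ := by
        congr 1
      simp only [this] at hvar
      linarith
    have h2 : (∫ ω, n j ω ∂μ) ^ 2 ≤ C := h1.trans (hbound j)
    calc ∫ ω, n j ω ∂μ = Real.sqrt ((∫ ω, n j ω ∂μ) ^ 2) := (Real.sqrt_sq (hninn j)).symm
      _ ≤ Real.sqrt C := Real.sqrt_le_sqrt h2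
  have hindepn : ∀ j i : Fin N, j ≠ i → IndepFun (n j) (n i) μ := by
    intro j i hji
    exact (hindep j i hji).comp measurable_norm measurable_norm
  have hprodint : ∀ j i : Fin N, j ≠ i → Integrable (fun ω => n j ω * n i ω) μ := by
    intro j i hji
    exact (hindepn j i hji).integrable_mul (hni j) (hni i)
  have hprod : ∀ j i : Fin N, j ≠ i → ∫ ω, n j ω * n i ω ∂μ ≤ C := by
    intro j i hji
    rw [show (∫ ω, n j ω * n i ω ∂μ) = (∫ ω, n j ω ∂μ) * ∫ ω, n i ω ∂μ from
      (hindepn j i hji).integral_mul_eq_mul_integral (hnm j) (hnm i)]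
    calc (∫ ω, n j ω ∂μ) * ∫ ω, n i ω ∂μ
        ≤ Real.sqrt C * Real.sqrt C :=
          mul_le_mul (hInn j) (hInn i) (hninn i) (Real.sqrt_nonneg C)
      _ = C := Real.mul_self_sqrt hC
  have mainbd : ∀ i, ∫ ω, |G (xbar i ω) - G (xbarmi i ω)| ∂μ
      ≤ Real.sqrt C * ‖g 0‖ / N + β * C / N + β * C / (2 * N ^ 2) := by
    intro i
    set h : Ω → ℝ := fun ω =>
      ‖g 0‖ * ((N:ℝ)⁻¹ * n i ω)
        + β * ((N:ℝ)⁻¹ ^ 2 * ∑ j ∈ Finset.univ.erase i, n j ω * n i ω)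
        + β / 2 * ((N:ℝ)⁻¹ ^ 2 * n i ω ^ 2) with hh
    have hInt : Integrable h μ := by
      refine ((((hni i).const_mul _).const_mul _).add
        ((((integrable_finset_sum _ fun j hj =>
          hprodint j i (Finset.ne_of_mem_erase hj)).const_mul _).const_mul _))).add
        (((hsq i).const_mul _).const_mul _)
    have hptwise : ∀ ω, |G (xbar i ω) - G (xbarmi i ω)| ≤ h ω := by
      intro ω
      have hd : xbar i ω - xbarmi i ω = (N:ℝ)⁻¹ • x i ω := by
        rw [hxbar, hxbarmi, ← smul_sub]
        congr 1
        have := Finset.sum_erase_add Finset.univ (fun j => x j ω) (Finset.mem_univ i)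
        linear_combination (norm := abel) this.symm
      have hdn : ‖xbar i ω - xbarmi i ω‖ = (N:ℝ)⁻¹ * n i ω := by
        rw [hd, norm_smul]
        simp [abs_of_nonneg (le_of_lt (inv_pos.2 hNr)), n]
      have hkey := descent_lemma G g β hderiv hlip (xbar i ω) (xbarmi i ω)
      have hgb : ‖g (xbarmi i ω)‖ ≤ ‖g 0‖ + β * ((N:ℝ)⁻¹ * ∑ j ∈ Finset.univ.erase i, n j ω) := by
        have h1 : ‖g (xbarmi i ω) - g 0‖ ≤ β * ‖xbarmi i ω‖ := by
          simpa using hlip (xbarmi i ω) 0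
        have h2 : ‖xbarmi i ω‖ ≤ (N:ℝ)⁻¹ * ∑ j ∈ Finset.univ.erase i, n j ω := by
          rw [hxbarmi, norm_smul]
          gcongr
          · simp [abs_of_nonneg (le_of_lt (inv_pos.2 hNr))]
          · exact norm_sum_le _ _
        calc ‖g (xbarmi i ω)‖ = ‖g 0 + (g (xbarmi i ω) - g 0)‖ := by rw [add_sub_cancel]
          _ ≤ ‖g 0‖ + ‖g (xbarmi i ω) - g 0‖ := norm_add_le _ _
          _ ≤ ‖g 0‖ + β * ((N:ℝ)⁻¹ * ∑ j ∈ Finset.univ.erase i, n j ω) := by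
              have := h1.trans (mul_le_mul_of_nonneg_left h2 hβ)
              linarith
      have hsumnn : 0 ≤ ∑ j ∈ Finset.univ.erase i, n j ω :=
        Finset.sum_nonneg fun j _ => norm_nonneg _
      have hninn' : (0:ℝ) ≤ n i ω := norm_nonneg _
      have hinv : (0:ℝ) ≤ (N:ℝ)⁻¹ := le_of_lt (inv_pos.2 hNr)
      calc |G (xbar i ω) - G (xbarmi i ω)|
          ≤ ‖g (xbarmi i ω)‖ * ‖xbar i ω - xbarmi i ω‖
            + β / 2 * ‖xbar i ω - xbarmi i ω‖ ^ 2 := hkey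
        _ ≤ (‖g 0‖ + β * ((N:ℝ)⁻¹ * ∑ j ∈ Finset.univ.erase i, n j ω)) * ((N:ℝ)⁻¹ * n i ω)
            + β / 2 * ((N:ℝ)⁻¹ * n i ω) ^ 2 := by
            rw [hdn]
            gcongr
        _ = h ω := by
            simp only [hh]
            rw [← Finset.sum_mul]
            ring
    have hmono := integral_mono (hGint i) hInt hptwise
    have I1 : Integrable (fun ω => ‖g 0‖ * ((N:ℝ)⁻¹ * n i ω)) μ :=
      ((hni i).const_mul _).const_mul _
    have I2 : Integrable (fun ω =>
        β * ((N:ℝ)⁻¹ ^ 2 * ∑ j ∈ Finset.univ.erase i, n j ω * n i ω)) μ :=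
      (((integrable_finset_sum _ fun j hj =>
        hprodint j i (Finset.ne_of_mem_erase hj)).const_mul _).const_mul _)
    have I3 : Integrable (fun ω => β / 2 * ((N:ℝ)⁻¹ ^ 2 * n i ω ^ 2)) μ :=
      ((hsq i).const_mul _).const_mul _
    have hIntegral : ∫ ω, h ω ∂μ
        = ‖g 0‖ * ((N:ℝ)⁻¹ * ∫ ω, n i ω ∂μ)
          + β * ((N:ℝ)⁻¹ ^ 2 * ∑ j ∈ Finset.univ.erase i, ∫ ω, n j ω * n i ω ∂μ)
          + β / 2 * ((N:ℝ)⁻¹ ^ 2 * ∫ ω, n i ω ^ 2 ∂μ) := by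
      have I12 : Integrable (fun ω => ‖g 0‖ * ((N:ℝ)⁻¹ * n i ω)
          + β * ((N:ℝ)⁻¹ ^ 2 * ∑ j ∈ Finset.univ.erase i, n j ω * n i ω)) μ := I1.add I2
      simp only [hh]
      rw [integral_add I12 I3, integral_add I1 I2,
        integral_const_mul, integral_const_mul, integral_const_mul, integral_const_mul,
        integral_const_mul, integral_const_mul,
        integral_finset_sum _ fun j hj => hprodint j i (Finset.ne_of_mem_erase hj)]
    have hsum : ∑ j ∈ Finset.univ.erase i, ∫ ω, n j ω * n i ω ∂μ ≤ (N:ℝ) * C := by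
      calc ∑ j ∈ Finset.univ.erase i, ∫ ω, n j ω * n i ω ∂μ
          ≤ ∑ _j ∈ Finset.univ.erase i, C :=
            Finset.sum_le_sum fun j hj => hprod j i (Finset.ne_of_mem_erase hj)
        _ = ((Finset.univ.erase i).card : ℝ) * C := by rw [Finset.sum_const, nsmul_eq_mul]
        _ ≤ (N:ℝ) * C := by
            have hcard : (Finset.univ.erase i).card ≤ N := by
              simpa using Finset.card_le_card (Finset.erase_subset i Finset.univ)
            exact mul_le_mul_of_nonneg_right (by exact_mod_cast hcard) hC
    calc ∫ ω, |G (xbar i ω) - G (xbarmi i ω)| ∂μ ≤ ∫ ω, h ω ∂μ := hmono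
      _ = _ := hIntegral
      _ ≤ ‖g 0‖ * ((N:ℝ)⁻¹ * Real.sqrt C) + β * ((N:ℝ)⁻¹ ^ 2 * ((N:ℝ) * C))
          + β / 2 * ((N:ℝ)⁻¹ ^ 2 * C) := by
          gcongr
          · exact hInn i
          · exact hbound i
      _ = Real.sqrt C * ‖g 0‖ / N + β * C / N + β * C / (2 * N ^ 2) := by
          field_simp
  refine ⟨mainbd, ⟨Real.sqrt C * ‖g 0‖ + β * C + β * C / 2, ?_, ?_⟩⟩
  · positivity
  · intro i
    refine (mainbd i).trans ?_
    have hN1 : (1:ℝ) ≤ N := by exact_mod_cast hN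
    have h1 : β * C / (2 * (N:ℝ) ^ 2) ≤ (β * C / 2) / N := by
      rw [div_le_div_iff₀ (by positivity) hNr]
      have : (N:ℝ) * N ≥ N * 1 := by nlinarith
      nlinarith [mul_nonneg hβ hC]
    have h2 : Real.sqrt C * ‖g 0‖ / N + β * C / N + (β * C / 2) / N
        = (Real.sqrt C * ‖g 0‖ + β * C + β * C / 2) / N := by ring
    linarith
end
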